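/- Let L : ℝⁿ × ℝⁿ → ℝ, (x,v) ↦ L(x,v), be a smooth regular Lagrangian, i.e. the Hessian matrix W(x,v) with entries W_{ij} = ∂²L/∂vⁱ∂vʲ is invertible at every point, and let Γ be the associated Lagrangian dynamical vector field, Γ(x,v) = (v, F(x,v)), where F : ℝⁿ×ℝⁿ → ℝⁿ is smooth and satisfies the Euler–Lagrange relations ∑ⱼ W_{ij}(x,v)·Fʲ(x,v) + ∑ⱼ (∂²L/∂vⁱ∂xʲ)(x,v)·vʲ = (∂L/∂xⁱ)(x,v) for all i; assume also det W > 0 everywhere. If Y is a smooth vector field on ℝⁿ×ℝⁿ with [Γ,Y] = 0, then the function I = div Y + Y(log det W) is a first integral of Γ, i.e. Γ(I) = 0 identically. -/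

import Mathlib

/-- The divergence of a vector field on ℝⁿ×ℝⁿ: the trace of its Fréchet derivative. -/
noncomputable def pdiv {n : ℕ}
    (Z : (Fin n → ℝ) × (Fin n → ℝ) → (Fin n → ℝ) × (Fin n → ℝ))
    (p : (Fin n → ℝ) × (Fin n → ℝ)) : ℝ :=
  LinearMap.trace ℝ ((Fin n → ℝ) × (Fin n → ℝ))
    (fderiv ℝ Z p : ((Fin n → ℝ) × (Fin n → ℝ)) →ₗ[ℝ] ((Fin n → ℝ) × (Fin n → ℝ)))

/-- The Lie bracket of vector fields on ℝⁿ×ℝⁿ: [Z,Y](p) = DY(p)(Z(p)) − DZ(p)(Y(p)). -/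
noncomputable def plieBracket {n : ℕ}
    (Z Y : (Fin n → ℝ) × (Fin n → ℝ) → (Fin n → ℝ) × (Fin n → ℝ))
    (p : (Fin n → ℝ) × (Fin n → ℝ)) : (Fin n → ℝ) × (Fin n → ℝ) :=
  fderiv ℝ Y p (Z p) - fderiv ℝ Z p (Y p)

/-- The Hessian matrix of a Lagrangian with respect to the velocities:
`W i j = ∂²L/∂vⁱ∂vʲ`. -/
noncomputable def hessV {n : ℕ} (L : (Fin n → ℝ) × (Fin n → ℝ) → ℝ)
    (p : (Fin n → ℝ) × (Fin n → ℝ)) : Matrix (Fin n) (Fin n) ℝ :=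
  Matrix.of fun i j =>
    fderiv ℝ (fun q => fderiv ℝ L q (0, Pi.single j 1)) p (0, Pi.single i 1)

open scoped BigOperators
noncomputable section
variable {X G : Type*} [NormedAddCommGroup X] [NormedSpace ℝ X]
  [NormedAddCommGroup G] [NormedSpace ℝ G]

lemma contDiff_fderiv {f : X → G} (hf : ContDiff ℝ (⊤ : ℕ∞) f) : ContDiff ℝ (⊤ : ℕ∞) (fderiv ℝ f) :=
  hf.fderiv_right (by simp)

lemma cda {f : X → G} (hf : ContDiff ℝ (⊤ : ℕ∞) f) (b : X) :
    ContDiff ℝ (⊤ : ℕ∞) (fun q => fderiv ℝ f q b) :=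
  (contDiff_fderiv hf).clm_apply contDiff_const

lemma fderiv_fderiv_apply_const {f : X → G} (hf : ContDiff ℝ (⊤ : ℕ∞) f) (p a b : X) :
    fderiv ℝ (fun q => fderiv ℝ f q b) p a = fderiv ℝ (fderiv ℝ f) p a b := by
  rw [fderiv_clm_apply (((contDiff_fderiv hf).differentiable (by simp)).differentiableAt)
    (differentiableAt_const _)]
  simp

lemma schwarz {f : X → G} (hf : ContDiff ℝ (⊤ : ℕ∞) f) (p a b : X) :
    fderiv ℝ (fun q => fderiv ℝ f q b) p a = fderiv ℝ (fun q => fderiv ℝ f q a) p b := by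
  rw [fderiv_fderiv_apply_const hf p a b, fderiv_fderiv_apply_const hf p b a]
  exact hf.contDiffAt.isSymmSndFDerivAt (by simp; exact WithTop.coe_le_coe.2 (le_top : (2:ℕ∞) ≤ ⊤)) a b
variable {n : ℕ}

lemma trace_formula (A : ((Fin n → ℝ) × (Fin n → ℝ)) →L[ℝ] ((Fin n → ℝ) × (Fin n → ℝ))) :
    LinearMap.trace ℝ _ (A : ((Fin n → ℝ) × (Fin n → ℝ)) →ₗ[ℝ] ((Fin n → ℝ) × (Fin n → ℝ)))
      = ∑ i, (A (Pi.single i 1, 0)).1 i + ∑ i, (A (0, Pi.single i 1)).2 i := by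
  classical
  set b := (Pi.basisFun ℝ (Fin n)).prod (Pi.basisFun ℝ (Fin n))
  rw [LinearMap.trace_eq_matrix_trace ℝ b]
  rw [Matrix.trace]
  simp only [Matrix.diag, LinearMap.toMatrix_apply]
  rw [Fintype.sum_sum_type]
  congr 1 <;> apply Finset.sum_congr rfl <;> intro i _ <;>
    simp [b, Module.Basis.prod_apply, Pi.basisFun_apply, Module.Basis.prod_repr_inl, Module.Basis.prod_repr_inr]
variable {n : ℕ}

def detCM (n : ℕ) : ContinuousMultilinearMap ℝ (fun _ : Fin n => Fin n → ℝ) ℝ :=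
  { Matrix.detRowAlternating.toMultilinearMap with
    cont := Continuous.matrix_det (continuous_id : Continuous fun M : Matrix (Fin n) (Fin n) ℝ => M) }

lemma det_updateRow_eq (A : Matrix (Fin n) (Fin n) ℝ) (i : Fin n) (r : Fin n → ℝ) :
    (A.updateRow i r).det = ∑ j, r j * A.adjugate j i := by
  have hr : r = ∑ j, r j • (Pi.single j 1 : Fin n → ℝ) := by
    funext t
    simp [Pi.single_apply]
  calc (A.updateRow i r).det
      = Matrix.detRowAlternating.toMultilinearMap (Function.update (Matrix.of.symm A) i (∑ j, r j • (Pi.single j 1 : Fin n → ℝ))) := by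
        rw [← hr]; rfl
    _ = ∑ j, r j * (A.updateRow i (Pi.single j 1)).det := by
        rw [MultilinearMap.map_update_sum]
        refine Finset.sum_congr rfl fun j _ => ?_
        show (A.updateRow i ((r j) • (Pi.single j 1 : Fin n → ℝ))).det = _
        rw [Matrix.det_updateRow_smul]
    _ = ∑ j, r j * A.adjugate j i := by
        refine Finset.sum_congr rfl fun j _ => ?_
        rw [Matrix.adjugate_apply]

lemma linearDeriv_det (A : Matrix (Fin n) (Fin n) ℝ) (H : Fin n → Fin n → ℝ) :
    (detCM n).linearDeriv A H = Matrix.trace (A.adjugate * Matrix.of H) := by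
  erw [ContinuousMultilinearMap.linearDeriv_apply]
  have : ∀ i, detCM n (Function.update A i (H i)) = (A.updateRow i (H i)).det := fun i => rfl
  simp only [this, det_updateRow_eq]
  rw [Matrix.trace]
  rw [Finset.sum_comm]
  refine Finset.sum_congr rfl fun j _ => ?_
  simp [Matrix.mul_apply, Matrix.diag, mul_comm]

variable {X : Type*} [NormedAddCommGroup X] [NormedSpace ℝ X]

lemma adjugate_eq_det_smul_inv (A : Matrix (Fin n) (Fin n) ℝ) (h : A.det ≠ 0) :
    A.adjugate = A.det • A⁻¹ := by
  rw [Matrix.inv_def, smul_smul, Ring.inverse_eq_inv, mul_inv_cancel₀ h, one_smul]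

lemma hasFDerivAt_det_comp (Wf : X → (Fin n → Fin n → ℝ)) (p : X)
    (hWf : DifferentiableAt ℝ Wf p) :
    HasFDerivAt (fun q => (Matrix.of (Wf q)).det)
      (((detCM n).linearDeriv (Wf p)).comp (fderiv ℝ Wf p)) p :=
  ((detCM n).hasFDerivAt (Wf p)).comp p hWf.hasFDerivAt

lemma hasFDerivAt_logdet (Wf : X → (Fin n → Fin n → ℝ)) (p : X)
    (hWf : DifferentiableAt ℝ Wf p) (hdet : (Matrix.of (Wf p)).det ≠ 0) :
    HasFDerivAt (fun q => Real.log (Matrix.of (Wf q)).det)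
      (((Matrix.of (Wf p)).det)⁻¹ • (((detCM n).linearDeriv (Wf p)).comp (fderiv ℝ Wf p))) p :=
  (Real.hasDerivAt_log hdet).comp_hasFDerivAt (f := fun q => (Matrix.of (Wf q)).det) p (hasFDerivAt_det_comp Wf p hWf)

lemma logdet_deriv_apply (Wf : X → (Fin n → Fin n → ℝ)) (p : X) (h : X)
    (hWf : DifferentiableAt ℝ Wf p) (hdet : (Matrix.of (Wf p)).det ≠ 0) :
    fderiv ℝ (fun q => Real.log (Matrix.of (Wf q)).det) p h
      = Matrix.trace ((Matrix.of (Wf p))⁻¹ * Matrix.of (fderiv ℝ Wf p h)) := by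
  rw [(hasFDerivAt_logdet Wf p hWf hdet).fderiv]
  simp only [ContinuousLinearMap.smul_apply, ContinuousLinearMap.coe_comp', Function.comp_apply]
  erw [linearDeriv_det, show Matrix.adjugate (Wf p) = (Matrix.of (Wf p)).adjugate from rfl, adjugate_eq_det_smul_inv _ hdet, Matrix.smul_mul, Matrix.trace_smul,
    smul_eq_mul, smul_eq_mul, ← mul_assoc, inv_mul_cancel₀ hdet, one_mul]


variable {n : ℕ}

abbrev EE (n : ℕ) := (Fin n → ℝ) × (Fin n → ℝ)

def ee (i : Fin n) : Fin n → ℝ := Pi.single i 1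

lemma fderiv_fderiv_apply_const' {f : X → G} (hf : ContDiff ℝ (⊤ : ℕ∞) f) (p b : X) :
    fderiv ℝ (fun q => fderiv ℝ f q b) p = (fderiv ℝ (fderiv ℝ f) p).flip b := by
  rw [fderiv_clm_apply (((contDiff_fderiv hf).differentiable (by simp)).differentiableAt)
    (differentiableAt_const _)]
  ext a
  simp

lemma fderiv_pi_comp (π : G →L[ℝ] ℝ) {h : X → G} {p : X} (hh : DifferentiableAt ℝ h p) :
    fderiv ℝ (fun q => π (h q)) p = π.comp (fderiv ℝ h p) :=
  (π.hasFDerivAt.comp p hh.hasFDerivAt).fderiv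

lemma pdiv_eq (Z : EE n → EE n) (q : EE n) :
    pdiv Z q = ∑ i, (fderiv ℝ Z q (ee i, 0)).1 i + ∑ i, (fderiv ℝ Z q (0, ee i)).2 i :=
  trace_formula _

def π1 (i : Fin n) : EE n →L[ℝ] ℝ :=
  (ContinuousLinearMap.proj i).comp (ContinuousLinearMap.fst ℝ (Fin n → ℝ) (Fin n → ℝ))

def π2 (i : Fin n) : EE n →L[ℝ] ℝ :=
  (ContinuousLinearMap.proj i).comp (ContinuousLinearMap.snd ℝ (Fin n → ℝ) (Fin n → ℝ))

lemma term_contDiff (Z : EE n → EE n) (hZ : ContDiff ℝ (⊤ : ℕ∞) Z) (b : EE n) (π : EE n →L[ℝ] ℝ) :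
    ContDiff ℝ (⊤ : ℕ∞) (fun q => π (fderiv ℝ Z q b)) :=
  π.contDiff.comp ((contDiff_fderiv hZ).clm_apply contDiff_const)

lemma pdiv_contDiff (Z : EE n → EE n) (hZ : ContDiff ℝ (⊤ : ℕ∞) Z) : ContDiff ℝ (⊤ : ℕ∞) (pdiv Z) := by
  rw [show pdiv Z = fun q => ∑ i, π1 i (fderiv ℝ Z q (ee i, 0))
      + ∑ i, π2 i (fderiv ℝ Z q (0, ee i)) from funext fun q => pdiv_eq Z q]
  exact (ContDiff.sum fun i _ => term_contDiff Z hZ _ (π1 i)).add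
    (ContDiff.sum fun i _ => term_contDiff Z hZ _ (π2 i))

lemma fderiv_pdiv (Z : EE n → EE n) (hZ : ContDiff ℝ (⊤ : ℕ∞) Z) (p h : EE n) :
    fderiv ℝ (pdiv Z) p h
      = ∑ i, ((fderiv ℝ (fderiv ℝ Z) p h) (ee i, 0)).1 i
        + ∑ i, ((fderiv ℝ (fderiv ℝ Z) p h) (0, ee i)).2 i := by
  have hd : ∀ (b : EE n) (π : EE n →L[ℝ] ℝ),
      DifferentiableAt ℝ (fun q => π (fderiv ℝ Z q b)) p :=
    fun b π => ((term_contDiff Z hZ b π).differentiable (by simp)).differentiableAt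
  have hterm : ∀ (b : EE n) (π : EE n →L[ℝ] ℝ),
      fderiv ℝ (fun q => π (fderiv ℝ Z q b)) p h = π ((fderiv ℝ (fderiv ℝ Z) p h) b) := by
    intro b π
    rw [fderiv_pi_comp π (((contDiff_fderiv hZ).clm_apply
      contDiff_const).differentiable (by simp)).differentiableAt]
    simp [fderiv_fderiv_apply_const' hZ p b]
  rw [show pdiv Z = fun q => (∑ i, π1 i (fderiv ℝ Z q (ee i, 0)))
      + ∑ i, π2 i (fderiv ℝ Z q (0, ee i)) from funext fun q => pdiv_eq Z q]
  rw [fderiv_fun_add (DifferentiableAt.fun_sum fun i _ => hd _ (π1 i))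
      (DifferentiableAt.fun_sum fun i _ => hd _ (π2 i))]
  rw [ContinuousLinearMap.add_apply, fderiv_fun_sum (fun i _ => hd _ (π1 i)),
    fderiv_fun_sum (fun i _ => hd _ (π2 i)), ContinuousLinearMap.sum_apply,
    ContinuousLinearMap.sum_apply]
  congr 1 <;> exact Finset.sum_congr rfl fun i _ => hterm _ _

def T2 (L : EE n → ℝ) (b c q : EE n) : ℝ := fderiv ℝ (fun r => fderiv ℝ L r c) q b

def T3 (L : EE n → ℝ) (a b c p : EE n) : ℝ := fderiv ℝ (T2 L b c) p a

variable {L : EE n → ℝ}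

lemma T2_contDiff (hL : ContDiff ℝ (⊤ : ℕ∞) L) (b c : EE n) : ContDiff ℝ (⊤ : ℕ∞) (T2 L b c) :=
  cda (cda hL c) b

lemma T2_symm (hL : ContDiff ℝ (⊤ : ℕ∞) L) (b c q : EE n) : T2 L b c q = T2 L c b q :=
  schwarz hL q b c

lemma T3_swap12 (hL : ContDiff ℝ (⊤ : ℕ∞) L) (a b c p : EE n) : T3 L a b c p = T3 L b a c p :=
  schwarz (cda hL c) p a b

lemma T3_swap23 (hL : ContDiff ℝ (⊤ : ℕ∞) L) (a b c p : EE n) : T3 L a b c p = T3 L a c b p := by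
  unfold T3
  rw [show T2 L b c = T2 L c b from funext fun q => T2_symm hL b c q]

lemma T3_swap13 (hL : ContDiff ℝ (⊤ : ℕ∞) L) (a b c p : EE n) : T3 L a b c p = T3 L c b a p := by
  rw [T3_swap23 hL, T3_swap12 hL, T3_swap23 hL]

-- decomposition of vectors
lemma vec_fst_sum (u : Fin n → ℝ) :
    ((u, (0 : Fin n → ℝ)) : EE n) = ∑ j, u j • ((ee j : Fin n → ℝ), (0 : Fin n → ℝ)) := by
  ext t
  · simp only [Prod.fst_sum, Prod.smul_fst, Finset.sum_apply, Pi.smul_apply]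
    simp [ee, Pi.single_apply, smul_eq_mul]
  · simp [Prod.snd_sum]

lemma vec_snd_sum (u : Fin n → ℝ) :
    (((0 : Fin n → ℝ), u) : EE n) = ∑ j, u j • ((0 : Fin n → ℝ), (ee j : Fin n → ℝ)) := by
  ext t
  · simp [Prod.fst_sum]
  · simp only [Prod.snd_sum, Prod.smul_snd, Finset.sum_apply, Pi.smul_apply]
    simp [ee, Pi.single_apply, smul_eq_mul]

lemma T2_sum_b (u : Fin n → ℝ) (c : EE n) (q : EE n) :
    T2 L (u, 0) c q = ∑ j, u j * T2 L (ee j, 0) c q := by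
  unfold T2
  rw [vec_fst_sum u, map_sum]
  refine Finset.sum_congr rfl fun j _ => ?_
  rw [show (u j • ((ee j : Fin n → ℝ), (0 : Fin n → ℝ)) : EE n)
    = u j • (((ee j : Fin n → ℝ), (0 : Fin n → ℝ)) : EE n) from rfl, map_smul]
  simp

lemma T2_sum_c (hL : ContDiff ℝ (⊤ : ℕ∞) L) (b : EE n) (u : Fin n → ℝ) (q : EE n) :
    T2 L b (0, u) q = ∑ j, u j * T2 L b (0, ee j) q := by
  unfold T2
  have h1 : (fun r => fderiv ℝ L r ((0 : Fin n → ℝ), u))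
      = fun r => ∑ j, u j * fderiv ℝ L r (0, ee j) := by
    funext r
    rw [vec_snd_sum u, map_sum]
    refine Finset.sum_congr rfl fun j _ => ?_
    rw [show (u j • (((0 : Fin n → ℝ), ee j) : EE n) : EE n)
      = u j • ((((0 : Fin n → ℝ), ee j)) : EE n) from rfl, map_smul]
    simp
  rw [h1, fderiv_fun_sum (fun j _ => (((cda hL (0, ee j)).differentiable
    (by simp)).differentiableAt).const_mul (u j))]
  rw [ContinuousLinearMap.sum_apply]
  refine Finset.sum_congr rfl fun j _ => ?_
  rw [fderiv_const_mul (((cda hL (0, ee j)).differentiable (by simp)).differentiableAt)]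
  simp

lemma T3_sum_c (hL : ContDiff ℝ (⊤ : ℕ∞) L) (a b : EE n) (u : Fin n → ℝ) (p : EE n) :
    T3 L a b (0, u) p = ∑ j, u j * T3 L a b (0, ee j) p := by
  unfold T3
  have h1 : T2 L b (0, u) = fun q => ∑ j, u j * T2 L b (0, ee j) q :=
    funext fun q => T2_sum_c hL b u q
  rw [h1, fderiv_fun_sum (fun j _ => (((T2_contDiff hL b (0, ee j)).differentiable
    (by simp)).differentiableAt).const_mul (u j))]
  rw [ContinuousLinearMap.sum_apply]
  refine Finset.sum_congr rfl fun j _ => ?_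
  rw [fderiv_const_mul (((T2_contDiff hL b (0, ee j)).differentiable (by simp)).differentiableAt)]
  simp

lemma T3_sum_b (hL : ContDiff ℝ (⊤ : ℕ∞) L) (a : EE n) (u : Fin n → ℝ) (c : EE n) (p : EE n) :
    T3 L a (u, 0) c p = ∑ j, u j * T3 L a (ee j, 0) c p := by
  unfold T3
  have h1 : T2 L (u, 0) c = fun q => ∑ j, u j * T2 L (ee j, 0) c q :=
    funext fun q => T2_sum_b u c q
  rw [h1, fderiv_fun_sum (fun j _ => (((T2_contDiff hL (ee j, 0) c).differentiable
    (by simp)).differentiableAt).const_mul (u j))]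
  rw [ContinuousLinearMap.sum_apply]
  refine Finset.sum_congr rfl fun j _ => ?_
  rw [fderiv_const_mul (((T2_contDiff hL (ee j, 0) c).differentiable (by simp)).differentiableAt)]
  simp


def Wfun (L : EE n → ℝ) : EE n → (Fin n → Fin n → ℝ) :=
  fun q i j => T2 L (0, ee i) (0, ee j) q

lemma Wfun_contDiff (hL : ContDiff ℝ (⊤ : ℕ∞) L) : ContDiff ℝ (⊤ : ℕ∞) (Wfun L) :=
  contDiff_pi.2 fun _ => contDiff_pi.2 fun _ => T2_contDiff hL _ _

lemma fderiv_Wfun (hL : ContDiff ℝ (⊤ : ℕ∞) L) (p h : EE n) (i j : Fin n) :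
    fderiv ℝ (Wfun L) p h i j = T3 L h (0, ee i) (0, ee j) p := by
  have hd2 : ∀ i j, DifferentiableAt ℝ (fun q => Wfun L q i j) p := fun i j =>
    ((T2_contDiff hL (0, ee i) (0, ee j)).differentiable (by simp)).differentiableAt
  have h1 : fderiv ℝ (Wfun L) p
      = ContinuousLinearMap.pi (fun i => fderiv ℝ (fun q => Wfun L q i) p) :=
    fderiv_pi (fun i => differentiableAt_pi.2 fun j => hd2 i j)
  rw [h1]
  simp only [ContinuousLinearMap.pi_apply]
  have h2 : fderiv ℝ (fun q => Wfun L q i) p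
      = ContinuousLinearMap.pi (fun j => fderiv ℝ (fun q => Wfun L q i j) p) :=
    fderiv_pi (fun j => hd2 i j)
  rw [h2]
  simp only [ContinuousLinearMap.pi_apply]
  rfl

lemma logdet_contDiff (hL : ContDiff ℝ (⊤ : ℕ∞) L) (hdetpos : ∀ p, 0 < (hessV L p).det) :
    ContDiff ℝ (⊤ : ℕ∞) (fun r => Real.log (hessV L r).det) := by
  rw [contDiff_iff_contDiffAt]
  intro q
  have hdetCD : ContDiff ℝ (⊤ : ℕ∞) (fun r => (hessV L r).det) := by
    have : (fun r => (hessV L r).det) = fun r => detCM n (Wfun L r) := rfl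
    rw [this]
    exact (detCM n).contDiff.comp (Wfun_contDiff hL)
  exact (Real.contDiffAt_log.2 (hdetpos q).ne').comp q hdetCD.contDiffAt

lemma logdet_fderiv (hL : ContDiff ℝ (⊤ : ℕ∞) L) (hdetpos : ∀ p, 0 < (hessV L p).det)
    (p h : EE n) :
    fderiv ℝ (fun r => Real.log (hessV L r).det) p h
      = Matrix.trace ((hessV L p)⁻¹ * Matrix.of (fderiv ℝ (Wfun L) p h)) := by
  have hWd : DifferentiableAt ℝ (Wfun L) p :=
    ((Wfun_contDiff hL).differentiable (by simp)).differentiableAt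
  have hfun : (fun r => Real.log (hessV L r).det)
      = fun r => Real.log (Matrix.of (Wfun L r)).det := rfl
  rw [hfun]
  exact logdet_deriv_apply (Wfun L) p h hWd (hdetpos p).ne'

lemma K1 {n : ℕ} (L : EE n → ℝ) (F : EE n → Fin n → ℝ)
    (hL : ContDiff ℝ (⊤ : ℕ∞) L) (hF : ContDiff ℝ (⊤ : ℕ∞) F)
    (hdetpos : ∀ p, 0 < (hessV L p).det)
    (hEL : ∀ p : EE n, ∀ i,
      (∑ j, hessV L p i j * F p j) +
      (∑ j, fderiv ℝ (fun q => fderiv ℝ L q (0, Pi.single i 1)) p (Pi.single j 1, 0) * p.2 j)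
        = fderiv ℝ L p (Pi.single i 1, 0)) (p : EE n) :
    pdiv (fun q => (q.2, F q)) p
      + fderiv ℝ (fun r => Real.log (hessV L r).det) p (p.2, F p) = 0 := by
  classical
  set Wm : Matrix (Fin n) (Fin n) ℝ := hessV L p with hWm
  set U : Matrix (Fin n) (Fin n) ℝ := Wm⁻¹ with hU
  have hdu : IsUnit Wm.det := isUnit_iff_ne_zero.2 (hdetpos p).ne'
  -- differentiability helpers
  have dT2 : ∀ b c : EE n, DifferentiableAt ℝ (T2 L b c) p := fun b c =>
    ((T2_contDiff hL b c).differentiable (by simp)).differentiableAt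
  have dFj : ∀ j, DifferentiableAt ℝ (fun q : EE n => F q j) p := fun j =>
    differentiableAt_pi.1 ((hF.differentiable (by simp)).differentiableAt) j
  have dq2j : ∀ j, DifferentiableAt ℝ (fun q : EE n => q.2 j) p := fun j =>
    (π2 j).differentiableAt
  have fFj : ∀ j, fderiv ℝ (fun q : EE n => F q j) p (0, ee j) = fderiv ℝ F p (0, ee j) j := by
    intro j
    rw [show (fun q : EE n => F q j) = fun q => (ContinuousLinearMap.proj j
      (R := ℝ) (φ := fun _ : Fin n => ℝ)) (F q) from rfl,
      fderiv_pi_comp _ ((hF.differentiable (by simp)).differentiableAt)]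
    simp
  -- pdiv of Γ
  have hΓd : HasFDerivAt (fun q : EE n => (q.2, F q))
      ((ContinuousLinearMap.snd ℝ (Fin n → ℝ) (Fin n → ℝ)).prod (fderiv ℝ F p)) p :=
    (hasFDerivAt_snd).prodMk ((hF.differentiable (by simp)).differentiableAt).hasFDerivAt
  have hpdivΓ : pdiv (fun q : EE n => (q.2, F q)) p = ∑ k, fderiv ℝ F p (0, ee k) k := by
    rw [pdiv_eq, hΓd.fderiv]
    simp [ee]
  -- EL as identity of functions
  have hELf : ∀ i : Fin n, (fun q : EE n => (∑ j, T2 L (0, ee i) (0, ee j) q * F q j)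
      + ∑ j, T2 L (ee j, 0) (0, ee i) q * q.2 j) = fun q => fderiv ℝ L q (ee i, 0) := by
    intro i
    funext q
    exact hEL q i
  -- differentiated EL
  have hDEL : ∀ i k : Fin n,
      (∑ j, (T2 L (0, ee i) (0, ee j) p * fderiv ℝ F p (0, ee k) j
        + F p j * T3 L (0, ee k) (0, ee i) (0, ee j) p))
      + (∑ j, (T2 L (ee j, 0) (0, ee i) p * (ee k) j
        + p.2 j * T3 L (0, ee k) (ee j, 0) (0, ee i) p))
      = T2 L (ee i, 0) (0, ee k) p := by
    intro i k
    have dsum1 : DifferentiableAt ℝ (fun q : EE n => ∑ j, T2 L (0, ee i) (0, ee j) q * F q j) p :=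
      DifferentiableAt.fun_sum fun j _ => (dT2 _ _).mul (dFj j)
    have dsum2 : DifferentiableAt ℝ (fun q : EE n => ∑ j, T2 L (ee j, 0) (0, ee i) q * q.2 j) p :=
      DifferentiableAt.fun_sum fun j _ => (dT2 _ _).mul (dq2j j)
    have haveR : fderiv ℝ (fun q : EE n => fderiv ℝ L q (ee i, 0)) p (0, ee k)
        = T2 L (ee i, 0) (0, ee k) p := by
      rw [show fderiv ℝ (fun q : EE n => fderiv ℝ L q (ee i, 0)) p (0, ee k)
        = T2 L (0, ee k) (ee i, 0) p from rfl]
      exact T2_symm hL _ _ _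
    have haveL : fderiv ℝ (fun q : EE n => (∑ j, T2 L (0, ee i) (0, ee j) q * F q j)
        + ∑ j, T2 L (ee j, 0) (0, ee i) q * q.2 j) p (0, ee k)
        = (∑ j, (T2 L (0, ee i) (0, ee j) p * fderiv ℝ F p (0, ee k) j
            + F p j * T3 L (0, ee k) (0, ee i) (0, ee j) p))
          + (∑ j, (T2 L (ee j, 0) (0, ee i) p * (ee k) j
            + p.2 j * T3 L (0, ee k) (ee j, 0) (0, ee i) p)) := by
      rw [fderiv_fun_add dsum1 dsum2, ContinuousLinearMap.add_apply,
        fderiv_fun_sum (fun j _ => (dT2 _ _).fun_mul (dFj j)),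
        fderiv_fun_sum (fun j _ => (dT2 _ _).fun_mul (dq2j j)),
        ContinuousLinearMap.sum_apply, ContinuousLinearMap.sum_apply]
      congr 1
      · refine Finset.sum_congr rfl fun j _ => ?_
        rw [fderiv_fun_mul (dT2 _ _) (dFj j)]
        simp only [ContinuousLinearMap.add_apply, ContinuousLinearMap.smul_apply, smul_eq_mul]
        rw [show (fun q : EE n => F q j) = fun q => (ContinuousLinearMap.proj j
          (R := ℝ) (φ := fun _ : Fin n => ℝ)) (F q) from rfl,
          fderiv_pi_comp _ ((hF.differentiable (by simp)).differentiableAt)]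
        rfl
      · refine Finset.sum_congr rfl fun j _ => ?_
        rw [fderiv_fun_mul (dT2 _ _) (dq2j j)]
        simp only [ContinuousLinearMap.add_apply, ContinuousLinearMap.smul_apply, smul_eq_mul]
        rw [show (fun q : EE n => q.2 j) = ⇑(π2 j) from rfl, (π2 j).fderiv]
        rw [show (π2 j) ((0, ee k) : EE n) = ee k j from rfl]
        ring_nf
        rfl
    calc (∑ j, (T2 L (0, ee i) (0, ee j) p * fderiv ℝ F p (0, ee k) j
            + F p j * T3 L (0, ee k) (0, ee i) (0, ee j) p))
          + (∑ j, (T2 L (ee j, 0) (0, ee i) p * (ee k) j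
            + p.2 j * T3 L (0, ee k) (ee j, 0) (0, ee i) p))
        = fderiv ℝ (fun q : EE n => (∑ j, T2 L (0, ee i) (0, ee j) q * F q j)
            + ∑ j, T2 L (ee j, 0) (0, ee i) q * q.2 j) p (0, ee k) := haveL.symm
      _ = fderiv ℝ (fun q : EE n => fderiv ℝ L q (ee i, 0)) p (0, ee k) := by rw [hELf i]
      _ = T2 L (ee i, 0) (0, ee k) p := haveR
  -- the two "third derivative" matrices
  set Mv : Matrix (Fin n) (Fin n) ℝ :=
    Matrix.of (fun i k => T3 L (0, F p) (0, ee i) (0, ee k) p) with hMv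
  set Mx : Matrix (Fin n) (Fin n) ℝ :=
    Matrix.of (fun i k => T3 L (p.2, 0) (0, ee i) (0, ee k) p) with hMx
  -- symmetry of U
  have hWsym : Wm.transpose = Wm := by
    ext i j
    exact T2_symm hL _ _ _
  have hUsym : ∀ i k, U i k = U k i := by
    intro i k
    have h1 : U.transpose = U := by
      rw [hU]
      conv_rhs => rw [← hWsym]
      rw [Matrix.transpose_nonsing_inv]
    conv_lhs => rw [← h1]
    rfl
  -- E1
  have E1 : ∑ k, ∑ i, U k i * (∑ j, T2 L (0, ee i) (0, ee j) p * fderiv ℝ F p (0, ee k) j)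
      = ∑ k, fderiv ℝ F p (0, ee k) k := by
    refine Finset.sum_congr rfl fun k _ => ?_
    have h1 : ∑ i, U k i * (∑ j, T2 L (0, ee i) (0, ee j) p * fderiv ℝ F p (0, ee k) j)
        = ∑ j, (U * Wm) k j * fderiv ℝ F p (0, ee k) j := by
      simp only [Finset.mul_sum]
      rw [Finset.sum_comm]
      refine Finset.sum_congr rfl fun j _ => ?_
      rw [Matrix.mul_apply, Finset.sum_mul]
      refine Finset.sum_congr rfl fun i _ => ?_
      rw [show Wm i j = T2 L (0, ee i) (0, ee j) p from rfl]
      ring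
    rw [h1, Matrix.nonsing_inv_mul _ hdu]
    simp [Matrix.one_apply]
  -- E2
  have E2 : ∑ k, ∑ i, U k i * (∑ j, F p j * T3 L (0, ee k) (0, ee i) (0, ee j) p)
      = Matrix.trace (U * Mv) := by
    rw [Matrix.trace]
    refine Finset.sum_congr rfl fun k _ => ?_
    rw [Matrix.diag, Matrix.mul_apply]
    refine Finset.sum_congr rfl fun i _ => ?_
    have h1 : ∑ j, F p j * T3 L (0, ee k) (0, ee i) (0, ee j) p
        = T3 L (0, ee k) (0, ee i) (0, F p) p := (T3_sum_c hL _ _ _ p).symm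
    rw [h1, T3_swap13 hL]
    rfl
  -- E3
  have E3 : ∑ k, ∑ i, U k i * (∑ j, p.2 j * T3 L (0, ee k) (ee j, 0) (0, ee i) p)
      = Matrix.trace (U * Mx) := by
    rw [Matrix.trace]
    refine Finset.sum_congr rfl fun k _ => ?_
    rw [Matrix.diag, Matrix.mul_apply]
    refine Finset.sum_congr rfl fun i _ => ?_
    have h1 : ∑ j, p.2 j * T3 L (0, ee k) (ee j, 0) (0, ee i) p
        = T3 L (0, ee k) (p.2, 0) (0, ee i) p := (T3_sum_b hL _ _ _ p).symm
    rw [h1, T3_swap12 hL, T3_swap23 hL]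
    rfl
  -- E4
  have E4 : ∑ k, ∑ i, U k i * (∑ j, T2 L (ee j, 0) (0, ee i) p * (ee k) j)
      = ∑ k, ∑ i, U k i * T2 L (ee i, 0) (0, ee k) p := by
    have h1 : ∀ k i : Fin n, ∑ j, T2 L (ee j, 0) (0, ee i) p * (ee k) j
        = T2 L (ee k, 0) (0, ee i) p := by
      intro k i
      rw [Finset.sum_eq_single k]
      · simp [ee]
      · intro b _ hb
        simp [ee, Pi.single_apply, hb]
      · simp
    simp only [h1]
    rw [Finset.sum_comm]
    refine Finset.sum_congr rfl fun k _ => Finset.sum_congr rfl fun i _ => ?_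
    rw [hUsym i k]
  -- contract hDEL with U
  have hcontract : ∑ k, ∑ i, U k i *
        ((∑ j, (T2 L (0, ee i) (0, ee j) p * fderiv ℝ F p (0, ee k) j
          + F p j * T3 L (0, ee k) (0, ee i) (0, ee j) p))
        + (∑ j, (T2 L (ee j, 0) (0, ee i) p * (ee k) j
          + p.2 j * T3 L (0, ee k) (ee j, 0) (0, ee i) p)))
      = ∑ k, ∑ i, U k i * T2 L (ee i, 0) (0, ee k) p := by
    refine Finset.sum_congr rfl fun k _ => Finset.sum_congr rfl fun i _ => ?_
    rw [hDEL i k]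
  have hexpand : ∑ k, ∑ i, U k i *
        ((∑ j, (T2 L (0, ee i) (0, ee j) p * fderiv ℝ F p (0, ee k) j
          + F p j * T3 L (0, ee k) (0, ee i) (0, ee j) p))
        + (∑ j, (T2 L (ee j, 0) (0, ee i) p * (ee k) j
          + p.2 j * T3 L (0, ee k) (ee j, 0) (0, ee i) p)))
      = (∑ k, ∑ i, U k i * (∑ j, T2 L (0, ee i) (0, ee j) p * fderiv ℝ F p (0, ee k) j))
        + (∑ k, ∑ i, U k i * (∑ j, F p j * T3 L (0, ee k) (0, ee i) (0, ee j) p))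
        + ((∑ k, ∑ i, U k i * (∑ j, T2 L (ee j, 0) (0, ee i) p * (ee k) j))
        + (∑ k, ∑ i, U k i * (∑ j, p.2 j * T3 L (0, ee k) (ee j, 0) (0, ee i) p))) := by
    simp only [Finset.sum_add_distrib, mul_add]
  have hkey : (∑ k, fderiv ℝ F p (0, ee k) k)
      + Matrix.trace (U * Mv) + Matrix.trace (U * Mx) = 0 := by
    have := hcontract
    rw [hexpand, E1, E2, E3, E4] at this
    linarith
  -- relate log det derivative to the traces
  have hMsum : Matrix.of (fderiv ℝ (Wfun L) p (p.2, F p)) = Mv + Mx := by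
    ext i k
    rw [Matrix.of_apply, fderiv_Wfun hL]
    have hsplit : ((p.2, F p) : EE n) = ((p.2, 0) : EE n) + ((0, F p) : EE n) := by
      ext <;> simp
    have : T3 L ((p.2, 0) + (0, F p)) (0, ee i) (0, ee k) p
        = T3 L (p.2, 0) (0, ee i) (0, ee k) p + T3 L (0, F p) (0, ee i) (0, ee k) p := by
      unfold T3
      rw [map_add]
    rw [hsplit, this]
    simp only [Matrix.add_apply, hMv, hMx, Matrix.of_apply]
    exact add_comm _ _
  have hlog : fderiv ℝ (fun r => Real.log (hessV L r).det) p (p.2, F p)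
      = Matrix.trace (U * Mv) + Matrix.trace (U * Mx) := by
    rw [logdet_fderiv hL hdetpos p, hMsum, ← hWm, ← hU, Matrix.mul_add, Matrix.trace_add]
  rw [hpdivΓ, hlog]
  linarith



/-- For a smooth regular Lagrangian `L(x,v)` on ℝⁿ×ℝⁿ (Hessian `W` invertible
and `det W > 0` everywhere) with Lagrangian dynamical vector field `Γ(x,v) = (v, F(x,v))`
satisfying the Euler–Lagrange relations, if `Y` is a smooth vector field with `[Γ,Y] = 0`
then `I = div Y + Y(log det W)` is a first integral of `Γ`. -/
theorem stmt_9 {n : ℕ} (L : (Fin n → ℝ) × (Fin n → ℝ) → ℝ)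
    (F : (Fin n → ℝ) × (Fin n → ℝ) → (Fin n → ℝ))
    (Y : (Fin n → ℝ) × (Fin n → ℝ) → (Fin n → ℝ) × (Fin n → ℝ))
    (hL : ContDiff ℝ (⊤ : ℕ∞) L) (hF : ContDiff ℝ (⊤ : ℕ∞) F) (hY : ContDiff ℝ (⊤ : ℕ∞) Y)
    (hreg : ∀ p, IsUnit (hessV L p))
    (hdetpos : ∀ p, 0 < (hessV L p).det)
    (hEL : ∀ p, ∀ i,
      (∑ j, hessV L p i j * F p j) +
      (∑ j, fderiv ℝ (fun q => fderiv ℝ L q (0, Pi.single i 1)) p (Pi.single j 1, 0) * p.2 j)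
        = fderiv ℝ L p (Pi.single i 1, 0))
    (hcomm : ∀ p, plieBracket (fun q => (q.2, F q)) Y p = 0) :
    ∀ p : (Fin n → ℝ) × (Fin n → ℝ),
      fderiv ℝ (fun q => pdiv Y q + fderiv ℝ (fun r => Real.log (hessV L r).det) q (Y q))
        p (p.2, F p) = 0 := by
  intro p
  have hΓs : ContDiff ℝ (⊤ : ℕ∞) (fun q : EE n => (q.2, F q)) := ContDiff.prodMk contDiff_snd hF
  have hg : ContDiff ℝ (⊤ : ℕ∞) (fun r : EE n => Real.log (hessV L r).det) := logdet_contDiff hL hdetpos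
  have hbr : ∀ q : EE n, fderiv ℝ Y q (q.2, F q) = fderiv ℝ (fun q : EE n => (q.2, F q)) q (Y q) :=
    fun q => sub_eq_zero.1 (hcomm q)
  -- differentiability shorthands
  have dYp : DifferentiableAt ℝ Y p := (hY.differentiable (by simp)).differentiableAt
  have dΓp : DifferentiableAt ℝ (fun q : EE n => (q.2, F q)) p :=
    (hΓs.differentiable (by simp)).differentiableAt
  have dY2 : DifferentiableAt ℝ (fderiv ℝ Y) p :=
    ((contDiff_fderiv hY).differentiable (by simp)).differentiableAt
  have dΓ2 : DifferentiableAt ℝ (fderiv ℝ (fun q : EE n => (q.2, F q))) p :=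
    ((contDiff_fderiv hΓs).differentiable (by simp)).differentiableAt
  have dg2 : DifferentiableAt ℝ (fderiv ℝ (fun r : EE n => Real.log (hessV L r).det)) p :=
    ((contDiff_fderiv hg).differentiable (by simp)).differentiableAt
  have dpdivY : DifferentiableAt ℝ (pdiv Y) p :=
    ((pdiv_contDiff Y hY).differentiable (by simp)).differentiableAt
  have dpdivΓ : DifferentiableAt ℝ (pdiv (fun q : EE n => (q.2, F q))) p :=
    ((pdiv_contDiff _ hΓs).differentiable (by simp)).differentiableAt
  have dHY : DifferentiableAt ℝ
      (fun q : EE n => fderiv ℝ (fun r : EE n => Real.log (hessV L r).det) q (Y q)) p :=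
    dg2.clm_apply dYp
  have dHΓ : DifferentiableAt ℝ
      (fun q : EE n => fderiv ℝ (fun r : EE n => Real.log (hessV L r).det) q (q.2, F q)) p :=
    dg2.clm_apply dΓp
  -- symmetry of second derivatives
  have hsymY : ∀ a b : EE n, fderiv ℝ (fderiv ℝ Y) p a b = fderiv ℝ (fderiv ℝ Y) p b a :=
    hY.contDiffAt.isSymmSndFDerivAt (by simp; exact WithTop.coe_le_coe.2 (le_top : (2:ℕ∞) ≤ ⊤))
  have hsymΓ : ∀ a b : EE n, fderiv ℝ (fderiv ℝ (fun q : EE n => (q.2, F q))) p a b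
      = fderiv ℝ (fderiv ℝ (fun q : EE n => (q.2, F q))) p b a :=
    hΓs.contDiffAt.isSymmSndFDerivAt (by simp; exact WithTop.coe_le_coe.2 (le_top : (2:ℕ∞) ≤ ⊤))
  have hsymg : ∀ a b : EE n, fderiv ℝ (fderiv ℝ (fun r : EE n => Real.log (hessV L r).det)) p a b
      = fderiv ℝ (fderiv ℝ (fun r : EE n => Real.log (hessV L r).det)) p b a :=
    hg.contDiffAt.isSymmSndFDerivAt (by simp; exact WithTop.coe_le_coe.2 (le_top : (2:ℕ∞) ≤ ⊤))
  -- derivative of the bracket identity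
  have hbrd : ∀ b : EE n,
      fderiv ℝ (fderiv ℝ Y) p b (p.2, F p)
        + fderiv ℝ Y p (fderiv ℝ (fun q : EE n => (q.2, F q)) p b)
      = fderiv ℝ (fderiv ℝ (fun q : EE n => (q.2, F q))) p b (Y p)
        + fderiv ℝ (fun q : EE n => (q.2, F q)) p (fderiv ℝ Y p b) := by
    intro b
    have h1 : fderiv ℝ (fun q : EE n => fderiv ℝ Y q (q.2, F q)) p b
        = fderiv ℝ (fderiv ℝ Y) p b (p.2, F p)
          + fderiv ℝ Y p (fderiv ℝ (fun q : EE n => (q.2, F q)) p b) := by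
      rw [fderiv_clm_apply dY2 dΓp]
      simp
      exact add_comm _ _
    have h2 : fderiv ℝ (fun q : EE n => fderiv ℝ (fun q : EE n => (q.2, F q)) q (Y q)) p b
        = fderiv ℝ (fderiv ℝ (fun q : EE n => (q.2, F q))) p b (Y p)
          + fderiv ℝ (fun q : EE n => (q.2, F q)) p (fderiv ℝ Y p b) := by
      rw [fderiv_clm_apply dΓ2 dYp]
      simp
      exact add_comm _ _
    rw [← h1, ← h2, show (fun q : EE n => fderiv ℝ Y q (q.2, F q))
      = fun q : EE n => fderiv ℝ (fun q : EE n => (q.2, F q)) q (Y q) from funext hbr]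
  -- Part 2 : the log-det term
  have part2 : fderiv ℝ (fun q : EE n =>
        fderiv ℝ (fun r : EE n => Real.log (hessV L r).det) q (Y q)) p (p.2, F p)
      = fderiv ℝ (fun q : EE n =>
        fderiv ℝ (fun r : EE n => Real.log (hessV L r).det) q (q.2, F q)) p (Y p) := by
    rw [fderiv_clm_apply dg2 dYp, fderiv_clm_apply dg2 dΓp]
    simp only [ContinuousLinearMap.add_apply, ContinuousLinearMap.coe_comp',
      Function.comp_apply, ContinuousLinearMap.flip_apply]
    rw [hsymg, hbr p]
  -- Part 1 : the divergence term
  have part1 : fderiv ℝ (pdiv Y) p (p.2, F p)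
      = fderiv ℝ (pdiv (fun q : EE n => (q.2, F q))) p (Y p) := by
    rw [fderiv_pdiv Y hY p _, fderiv_pdiv _ hΓs p _]
    have hterm1 : ∀ b : EE n, fderiv ℝ (fderiv ℝ Y) p (p.2, F p) b
        = fderiv ℝ (fderiv ℝ (fun q : EE n => (q.2, F q))) p (Y p) b
          + ((fderiv ℝ (fun q : EE n => (q.2, F q)) p) ((fderiv ℝ Y p) b)
          - (fderiv ℝ Y p) ((fderiv ℝ (fun q : EE n => (q.2, F q)) p) b)) := by
      intro b
      rw [hsymY, hsymΓ (Y p) b]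
      have h := hbrd b
      have := eq_sub_of_add_eq h
      rw [this]
      abel
    simp only [hterm1]
    simp only [Prod.fst_add, Prod.snd_add, Prod.fst_sub, Prod.snd_sub, Pi.add_apply, Pi.sub_apply]
    rw [Finset.sum_add_distrib, Finset.sum_add_distrib, Finset.sum_sub_distrib,
      Finset.sum_sub_distrib]
    have htr : (∑ i, ((fderiv ℝ (fun q : EE n => (q.2, F q)) p) ((fderiv ℝ Y p) (ee i, 0))).1 i)
        + ∑ i, ((fderiv ℝ (fun q : EE n => (q.2, F q)) p) ((fderiv ℝ Y p) (0, ee i))).2 i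
        = (∑ i, ((fderiv ℝ Y p) ((fderiv ℝ (fun q : EE n => (q.2, F q)) p) (ee i, 0))).1 i)
        + ∑ i, ((fderiv ℝ Y p) ((fderiv ℝ (fun q : EE n => (q.2, F q)) p) (0, ee i))).2 i := by
      have h1 := trace_formula ((fderiv ℝ (fun q : EE n => (q.2, F q)) p).comp (fderiv ℝ Y p))
      have h2 := trace_formula ((fderiv ℝ Y p).comp (fderiv ℝ (fun q : EE n => (q.2, F q)) p))
      simp only [ContinuousLinearMap.coe_comp', Function.comp_apply] at h1 h2
      simp only [ee]
      rw [← h1, ← h2, ContinuousLinearMap.toLinearMap_comp, ContinuousLinearMap.toLinearMap_comp]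
      exact LinearMap.trace_comp_comm' _ _
    linarith
  -- assemble
  rw [fderiv_fun_add dpdivY dHY, ContinuousLinearMap.add_apply, part1, part2]
  have hsum2 : fderiv ℝ (pdiv (fun q : EE n => (q.2, F q))) p (Y p)
      + fderiv ℝ (fun q : EE n =>
          fderiv ℝ (fun r : EE n => Real.log (hessV L r).det) q (q.2, F q)) p (Y p)
      = fderiv ℝ (fun q : EE n => pdiv (fun q' : EE n => (q'.2, F q')) q
          + fderiv ℝ (fun r : EE n => Real.log (hessV L r).det) q (q.2, F q)) p (Y p) := by
    rw [fderiv_fun_add dpdivΓ dHΓ, ContinuousLinearMap.add_apply]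
  rw [hsum2]
  have hzero : (fun q : EE n => pdiv (fun q' : EE n => (q'.2, F q')) q
      + fderiv ℝ (fun r : EE n => Real.log (hessV L r).det) q (q.2, F q)) = fun _ => (0 : ℝ) :=
    funext fun q => K1 L F hL hF hdetpos hEL q
  rw [hzero, fderiv_fun_const]
  simp
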